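/- arXiv:1103.0135 — 3 statements merged into one kernel-verified Lean document; each statement's English description precedes it below -/
import Mathlib

section
/- Let A be a finite alphabet, p a probability distribution on A, and δ > 0. Then for every n ∈ ℕ, the probability under the n-fold product measure p^{⊗n} of the set of δ-typical sequences T^n_{p,δ} is at least 1 − (n+1)^{|A|}·2^{−n c δ²}, where c = 1/(2 ln 2). -/
open scoped BigOperators Classical

noncomputable section

/-- Number of occurrences of letter `a` in the word `x`. -/
def cnt {A : Type*} [DecidableEq A] {n : ℕ} (x : Fin n → A) (a : A) : ℕ :=
  (Finset.univ.filter fun i => x i = a).card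

/-- Number of joint occurrences of `(a,b)` in the pair of words `(x,y)`. -/
def cnt2 {A B : Type*} [DecidableEq A] [DecidableEq B] {n : ℕ}
    (x : Fin n → A) (y : Fin n → B) (a : A) (b : B) : ℕ :=
  (Finset.univ.filter fun i => x i = a ∧ y i = b).card

/-- The set of `δ`-typical sequences for the distribution `p`. -/
def typical {A : Type*} [Fintype A] [DecidableEq A] (p : A → ℝ) (δ : ℝ) (n : ℕ) :
    Set (Fin n → A) :=
  {x | ∀ a, |(cnt x a : ℝ) / n - p a| ≤ δ ∧ (p a = 0 → cnt x a = 0)}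

/-- The set of conditionally `δ`-typical sequences for channel `W` given input `x`. -/
def condTypical {A B : Type*} [Fintype A] [Fintype B] [DecidableEq A] [DecidableEq B]
    (W : A → B → ℝ) (δ : ℝ) {n : ℕ} (x : Fin n → A) : Set (Fin n → B) :=
  {y | ∀ a b, |(cnt2 x y a b : ℝ) / n - W a b * (cnt x a : ℝ) / n| ≤ δ ∧
      (W a b = 0 → cnt2 x y a b = 0)}

/-- Probability of the event `E` under the (finitely supported) distribution `q`. -/
def probOf {X : Type*} [Fintype X] (q : X → ℝ) (E : Set X) : ℝ :=
  ∑ x, Set.indicator E q x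

/-- Shannon entropy in bits. -/
def shannonH {X : Type*} [Fintype X] (q : X → ℝ) : ℝ := -∑ x, q x * Real.logb 2 (q x)

/-- Conditional entropy `H(V|p)` in bits. -/
def condH {A B : Type*} [Fintype A] [Fintype B] (p : A → ℝ) (V : A → B → ℝ) : ℝ :=
  ∑ a, p a * shannonH (V a)

/-- Output distribution `pV` of channel `V` under input distribution `p`. -/
def outDist {A B : Type*} [Fintype A] (p : A → ℝ) (V : A → B → ℝ) : B → ℝ :=
  fun b => ∑ a, p a * V a b

/-- Mutual information `I(p,V)` in bits. -/
def mutInfo {A B : Type*} [Fintype A] [Fintype B] (p : A → ℝ) (V : A → B → ℝ) : ℝ :=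
  shannonH (outDist p V) - condH p V

/-- Variational (L¹) distance. -/
def tv {X : Type*} [Fintype X] (P Q : X → ℝ) : ℝ := ∑ x, |P x - Q x|

lemma exp_cubic {t : ℝ} (h0 : 0 ≤ t) (h1 : t ≤ 1) :
    Real.exp t ≤ 1 + t + t ^ 2 / 2 + 2 * t ^ 3 / 9 := by
  have h := Real.exp_bound' h0 h1 (n := 3) (by norm_num)
  norm_num [Finset.sum_range_succ, Nat.factorial] at h
  nlinarith [h]

lemma probOf_nonneg {X : Type*} [Fintype X] {q : X → ℝ} (hq : ∀ x, 0 ≤ q x) (E : Set X) :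
    0 ≤ probOf q E :=
  Finset.sum_nonneg fun x _ => Set.indicator_nonneg (fun y _ => hq y) x

lemma probOf_le_one {X : Type*} [Fintype X] {q : X → ℝ} (hq : ∀ x, 0 ≤ q x)
    (htot : ∑ x, q x = 1) (E : Set X) : probOf q E ≤ 1 := by
  rw [← htot]
  exact Finset.sum_le_sum fun x _ => Set.indicator_le_self' (fun y _ => hq y) x

lemma chernoff {A : Type*} [Fintype A] [DecidableEq A]
    (p : A → ℝ) (hp0 : ∀ a, 0 ≤ p a) (hp1 : ∑ a, p a = 1)
    (E : A → Prop) [DecidablePred E] (q : ℝ)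
    (hqE : ∑ b ∈ Finset.univ.filter E, p b = q)
    (δ : ℝ) (hδ : 0 < δ) (n : ℕ) :
    probOf (fun x : Fin n → A => ∏ i, p (x i))
      {x | (n : ℝ) * (q + δ) ≤ ((Finset.univ.filter fun i => E (x i)).card : ℝ)}
      ≤ Real.exp (-((n : ℝ) * δ ^ 2) / 2) := by
  set w : (Fin n → A) → ℝ := fun x => ∏ i, p (x i) with hw
  have hw0 : ∀ x, 0 ≤ w x := fun x => Finset.prod_nonneg fun i _ => hp0 _
  have htot : ∑ x : Fin n → A, w x = 1 := by
    rw [hw]; rw [← Fintype.sum_pow p n, hp1, one_pow]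
  have hq0 : 0 ≤ q := hqE ▸ Finset.sum_nonneg fun b _ => hp0 b
  rcases Nat.eq_zero_or_pos n with hn | hn
  · subst hn
    simpa using probOf_le_one hw0 htot _
  by_cases hqd : 1 < q + δ
  · -- event is empty
    have hempty : ∀ x : Fin n → A,
        x ∉ {x : Fin n → A | (n : ℝ) * (q + δ) ≤ ((Finset.univ.filter fun i => E (x i)).card : ℝ)} := by
      intro x hx
      have hcard' : (Finset.univ.filter fun i => E (x i)).card ≤ n := by
        simpa using Finset.card_filter_le Finset.univ (fun i => E (x i))
      have hcard : ((Finset.univ.filter fun i => E (x i)).card : ℝ) ≤ n := by exact_mod_cast hcard'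
      have hn' : (0:ℝ) < n := by exact_mod_cast hn
      have := hx.out
      nlinarith
    have : probOf w {x : Fin n → A | (n : ℝ) * (q + δ) ≤ ((Finset.univ.filter fun i => E (x i)).card : ℝ)} = 0 := by
      unfold probOf
      exact Finset.sum_eq_zero fun x _ => Set.indicator_of_notMem (hempty x) w
    rw [this]
    positivity
  push_neg at hqd
  have hδ1 : δ ≤ 1 := by linarith
  set S : Set (Fin n → A) :=
    {x | (n : ℝ) * (q + δ) ≤ ((Finset.univ.filter fun i => E (x i)).card : ℝ)} with hS
  -- step 1: pointwise Chernoff bound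
  have step1 : probOf w S ≤
      Real.exp (-(δ * ((n:ℝ) * (q + δ)))) *
        ∑ x : Fin n → A, Real.exp (δ * ((Finset.univ.filter fun i => E (x i)).card : ℝ)) * w x := by
    rw [probOf, Finset.mul_sum]
    refine Finset.sum_le_sum fun x _ => ?_
    by_cases hx : x ∈ S
    · rw [Set.indicator_of_mem hx, ← mul_assoc, ← Real.exp_add]
      have hexp : (0:ℝ) ≤ -(δ * ((n:ℝ)*(q+δ))) + δ * ((Finset.univ.filter fun i => E (x i)).card : ℝ) := by
        have := hx.out
        nlinarith
      nlinarith [Real.one_le_exp hexp, hw0 x]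
    · rw [Set.indicator_of_notMem hx]
      exact mul_nonneg (Real.exp_pos _).le (mul_nonneg (Real.exp_pos _).le (hw0 x))
  -- step 2: MGF identity
  have step2 : ∑ x : Fin n → A, Real.exp (δ * ((Finset.univ.filter fun i => E (x i)).card : ℝ)) * w x
      = (∑ b, p b * Real.exp (if E b then δ else 0)) ^ n := by
    rw [Fintype.sum_pow]
    refine Finset.sum_congr rfl fun x _ => ?_
    rw [Finset.prod_mul_distrib, ← Real.exp_sum]
    have hcnt : ∑ i, (if E (x i) then δ else 0) = δ * ((Finset.univ.filter fun i => E (x i)).card : ℝ) := by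
      rw [Finset.sum_ite, Finset.sum_const, Finset.sum_const_zero, add_zero, nsmul_eq_mul, mul_comm]
    rw [hcnt, mul_comm]
  -- step 3: bound the base
  have base_eq : ∑ b, p b * Real.exp (if E b then δ else 0) = 1 + q * (Real.exp δ - 1) := by
    rw [← Finset.sum_filter_add_sum_filter_not Finset.univ E]
    have h1 : ∑ b ∈ Finset.univ.filter E, p b * Real.exp (if E b then δ else 0)
        = q * Real.exp δ := by
      rw [← hqE, Finset.sum_mul]
      exact Finset.sum_congr rfl fun b hb => by
        rw [if_pos (Finset.mem_filter.mp hb).2]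
    have h2 : ∑ b ∈ Finset.univ.filter (fun b => ¬ E b), p b * Real.exp (if E b then δ else 0)
        = 1 - q := by
      have : ∑ b ∈ Finset.univ.filter (fun b => ¬ E b), p b * Real.exp (if E b then δ else 0)
          = ∑ b ∈ Finset.univ.filter (fun b => ¬ E b), p b := by
        refine Finset.sum_congr rfl fun b hb => ?_
        rw [if_neg (Finset.mem_filter.mp hb).2, Real.exp_zero, mul_one]
      rw [this]
      have := Finset.sum_filter_add_sum_filter_not Finset.univ E p
      rw [hqE] at this
      linarith [this.symm ▸ hp1]
    rw [h1, h2]; ring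
  have base_le : 1 + q * (Real.exp δ - 1) ≤ Real.exp (q * δ + δ ^ 2 / 2) := by
    have hcub := exp_cubic hδ.le hδ1
    have he0 : 0 ≤ Real.exp δ - 1 - δ := by nlinarith [Real.add_one_le_exp δ]
    have hq1 : q ≤ 1 - δ := by linarith
    have key : q * (Real.exp δ - 1 - δ) ≤ δ ^ 2 / 2 := by
      calc q * (Real.exp δ - 1 - δ) ≤ (1 - δ) * (δ ^ 2 / 2 + 2 * δ ^ 3 / 9) := by
            apply mul_le_mul hq1 (by linarith) he0 (by linarith)
        _ ≤ δ ^ 2 / 2 := by nlinarith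
    have := Real.add_one_le_exp (q * (Real.exp δ - 1))
    calc 1 + q * (Real.exp δ - 1) ≤ Real.exp (q * (Real.exp δ - 1)) := by linarith
      _ ≤ Real.exp (q * δ + δ ^ 2 / 2) := by
          apply Real.exp_le_exp.mpr; nlinarith
  have base_nonneg : 0 ≤ 1 + q * (Real.exp δ - 1) := by
    nlinarith [Real.add_one_le_exp δ, Real.exp_pos δ]
  rw [step2, base_eq] at step1
  calc probOf w S ≤ Real.exp (-(δ * ((n:ℝ) * (q + δ)))) * (1 + q * (Real.exp δ - 1)) ^ n := step1
    _ ≤ Real.exp (-(δ * ((n:ℝ) * (q + δ)))) * Real.exp (q * δ + δ ^ 2 / 2) ^ n := by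
        apply mul_le_mul_of_nonneg_left _ (Real.exp_pos _).le
        exact pow_le_pow_left₀ base_nonneg base_le n
    _ = Real.exp (-((n : ℝ) * δ ^ 2) / 2) := by
        rw [← Real.exp_nat_mul, ← Real.exp_add]
        congr 1; ring

lemma two_mul_le_two_pow (k : ℕ) (hk : 1 ≤ k) : 2 * k ≤ 2 ^ k := by
  induction k with
  | zero => omega
  | succ m ih =>
    rcases Nat.eq_zero_or_pos m with h | h
    · subst h; norm_num
    · have h1 := ih h
      have h2 : 2 ≤ 2 ^ m := by
        calc 2 = 2 ^ 1 := rfl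
          _ ≤ 2 ^ m := Nat.pow_le_pow_right (by norm_num) h
      calc 2 * (m + 1) = 2 * m + 2 := by ring
        _ ≤ 2 ^ m + 2 ^ m := by omega
        _ = 2 ^ (m + 1) := by ring

theorem typical_prob_bound {A : Type*} [Fintype A] [DecidableEq A]
    (p : A → ℝ) (hp0 : ∀ a, 0 ≤ p a) (hp1 : ∑ a, p a = 1)
    (δ : ℝ) (hδ : 0 < δ) (n : ℕ) :
    probOf (fun x : Fin n → A => ∏ i, p (x i)) (typical p δ n)
      ≥ 1 - ((n : ℝ) + 1) ^ Fintype.card A *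
          (2 : ℝ) ^ (-(n : ℝ) * (1 / (2 * Real.log 2)) * δ ^ 2) := by
  classical
  set w : (Fin n → A) → ℝ := fun x => ∏ i, p (x i) with hw
  have hw0 : ∀ x, 0 ≤ w x := fun x => Finset.prod_nonneg fun i _ => hp0 _
  have htot : ∑ x : Fin n → A, w x = 1 := by
    rw [hw, ← Fintype.sum_pow p n, hp1, one_pow]
  have hpow : (2 : ℝ) ^ (-(n : ℝ) * (1 / (2 * Real.log 2)) * δ ^ 2)
      = Real.exp (-((n : ℝ) * δ ^ 2) / 2) := by
    rw [Real.rpow_def_of_pos (by norm_num : (0:ℝ) < 2)]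
    congr 1
    have hl : Real.log 2 ≠ 0 := ne_of_gt (Real.log_pos one_lt_two)
    field_simp
  rw [hpow]
  rcases Nat.eq_zero_or_pos n with hn | hn
  · subst hn
    have h0 : -((0:ℕ):ℝ) * (1 / (2 * Real.log 2)) * δ ^ 2 = 0 := by push_cast; ring
    have hb := probOf_nonneg hw0 (typical p δ 0)
    have : Real.exp (-(((0:ℕ):ℝ) * δ ^ 2) / 2) = 1 := by norm_num
    rw [this]
    norm_num
    exact hb
  have hn' : (0:ℝ) < n := by exact_mod_cast hn
  have hA : Nonempty A := by
    by_contra h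
    rw [not_nonempty_iff] at h
    rw [Finset.univ_eq_empty, Finset.sum_empty] at hp1
    norm_num at hp1
  have hcard : 1 ≤ Fintype.card A := Fintype.card_pos
  set eb : ℝ := Real.exp (-((n : ℝ) * δ ^ 2) / 2) with heb
  have hebpos : 0 < eb := Real.exp_pos _
  -- events
  set UpS : A → Set (Fin n → A) :=
    fun a => {x | (n : ℝ) * (p a + δ) ≤ ((Finset.univ.filter fun i => x i = a).card : ℝ)} with hUpS
  set LowS : A → Set (Fin n → A) :=
    fun a => {x | (n : ℝ) * ((1 - p a) + δ) ≤ ((Finset.univ.filter fun i => ¬ (x i = a)).card : ℝ)} with hLowS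
  have hUp : ∀ a, probOf w (UpS a) ≤ eb := by
    intro a
    have hq : ∑ b ∈ Finset.univ.filter (fun b => b = a), p b = p a := by
      rw [Finset.filter_eq']; simp
    exact chernoff p hp0 hp1 (fun b => b = a) (p a) hq δ hδ n
  have hLow : ∀ a, probOf w (LowS a) ≤ eb := by
    intro a
    have hq : ∑ b ∈ Finset.univ.filter (fun b => ¬ (b = a)), p b = 1 - p a := by
      have h := Finset.sum_filter_add_sum_filter_not Finset.univ (fun b => b = a) p
      rw [hp1] at h
      have h2 : ∑ b ∈ Finset.univ.filter (fun b => b = a), p b = p a := by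
        rw [Finset.filter_eq']; simp
      linarith
    exact chernoff p hp0 hp1 (fun b => ¬ (b = a)) (1 - p a) hq δ hδ n
  -- complement probability
  have hadd : probOf w (typical p δ n) + probOf w ((typical p δ n)ᶜ) = 1 := by
    rw [probOf, probOf, ← Finset.sum_add_distrib, ← htot]
    refine Finset.sum_congr rfl fun x _ => ?_
    by_cases hx : x ∈ typical p δ n
    · rw [Set.indicator_of_mem hx, Set.indicator_of_notMem (by simpa using hx), add_zero]
    · rw [Set.indicator_of_notMem hx, Set.indicator_of_mem (Set.mem_compl hx), zero_add]
  -- union bound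
  have hterm : ∀ (x : Fin n → A) (a : A),
      0 ≤ Set.indicator (UpS a) w x + Set.indicator (LowS a) w x := fun x a =>
    add_nonneg (Set.indicator_nonneg (fun y _ => hw0 y) x)
      (Set.indicator_nonneg (fun y _ => hw0 y) x)
  have hunion : probOf w ((typical p δ n)ᶜ)
      ≤ ∑ a : A, (probOf w (UpS a) + probOf w (LowS a)) := by
    have hrhs : ∑ a : A, (probOf w (UpS a) + probOf w (LowS a))
        = ∑ x : Fin n → A, ∑ a : A,
            (Set.indicator (UpS a) w x + Set.indicator (LowS a) w x) := by
      rw [Finset.sum_comm]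
      exact Finset.sum_congr rfl fun a _ => by
        rw [probOf, probOf, Finset.sum_add_distrib]
    rw [probOf, hrhs]
    refine Finset.sum_le_sum fun x _ => ?_
    by_cases hx : x ∈ (typical p δ n)ᶜ
    swap
    · rw [Set.indicator_of_notMem hx]
      exact Finset.sum_nonneg fun a _ => hterm x a
    rw [Set.indicator_of_mem hx]
    have hx' : ¬ ∀ a, |(cnt x a : ℝ) / n - p a| ≤ δ ∧ (p a = 0 → cnt x a = 0) := hx
    push_neg at hx'
    obtain ⟨a, ha⟩ := hx'
    by_cases hdev : |(cnt x a : ℝ) / n - p a| ≤ δ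
    · obtain ⟨hpa, hcnt⟩ := ha hdev
      have hex : ∃ i, x i = a := by
        by_contra h
        push_neg at h
        exact hcnt (by simp [cnt, Finset.filter_eq_empty_iff, h])
      obtain ⟨i, hi⟩ := hex
      have hwx : w x = 0 := Finset.prod_eq_zero (Finset.mem_univ i) (by rw [hi, hpa])
      rw [hwx]
      exact Finset.sum_nonneg fun a _ => hterm x a
    · push_neg at hdev
      have hx_in : x ∈ UpS a ∨ x ∈ LowS a := by
        rcases lt_abs.mp hdev with h | h
        · left
          show (n : ℝ) * (p a + δ) ≤ ((Finset.univ.filter fun i => x i = a).card : ℝ)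
          have h2 : p a + δ < (cnt x a : ℝ) / n := by linarith
          have h3 := (lt_div_iff₀ hn').mp h2
          have : ((Finset.univ.filter fun i => x i = a).card : ℝ) = (cnt x a : ℝ) := by
            simp [cnt]
          rw [this]
          nlinarith
        · right
          show (n : ℝ) * ((1 - p a) + δ) ≤ ((Finset.univ.filter fun i => ¬ (x i = a)).card : ℝ)
          have hcc : cnt x a + (Finset.univ.filter fun i => ¬ (x i = a)).card = n := by
            have := Finset.card_filter_add_card_filter_not
              (s := (Finset.univ : Finset (Fin n))) (p := fun i => x i = a)
            simpa [cnt] using this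
          have hccR : ((Finset.univ.filter fun i => ¬ (x i = a)).card : ℝ)
              = (n : ℝ) - (cnt x a : ℝ) := by
            have := congrArg (Nat.cast : ℕ → ℝ) hcc
            push_cast at this
            linarith
          rw [hccR]
          have h2 : (cnt x a : ℝ) / n < p a - δ := by linarith
          have h3 := (div_lt_iff₀ hn').mp h2
          nlinarith
      rcases hx_in with h | h
      · calc w x = Set.indicator (UpS a) w x := (Set.indicator_of_mem h w).symm
          _ ≤ Set.indicator (UpS a) w x + Set.indicator (LowS a) w x :=
              le_add_of_nonneg_right (Set.indicator_nonneg (fun y _ => hw0 y) x)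
          _ ≤ _ := Finset.single_le_sum (fun a _ => hterm x a) (Finset.mem_univ a)
      · calc w x = Set.indicator (LowS a) w x := (Set.indicator_of_mem h w).symm
          _ ≤ Set.indicator (UpS a) w x + Set.indicator (LowS a) w x :=
              le_add_of_nonneg_left (Set.indicator_nonneg (fun y _ => hw0 y) x)
          _ ≤ _ := Finset.single_le_sum (fun a _ => hterm x a) (Finset.mem_univ a)
  have hsum : ∑ a : A, (probOf w (UpS a) + probOf w (LowS a))
      ≤ 2 * (Fintype.card A : ℝ) * eb := by
    calc ∑ a : A, (probOf w (UpS a) + probOf w (LowS a))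
        ≤ ∑ _a : A, 2 * eb := Finset.sum_le_sum fun a _ => by
          linarith [hUp a, hLow a]
      _ = (Fintype.card A : ℝ) * (2 * eb) := by
          rw [Finset.sum_const, Finset.card_univ, nsmul_eq_mul]
      _ = 2 * (Fintype.card A : ℝ) * eb := by ring
  have h2k : 2 * (Fintype.card A : ℝ) ≤ ((n : ℝ) + 1) ^ Fintype.card A := by
    have h1 : 2 * Fintype.card A ≤ 2 ^ Fintype.card A := two_mul_le_two_pow _ hcard
    have h2 : (2 : ℝ) ≤ (n : ℝ) + 1 := by
      have : (1:ℝ) ≤ n := by exact_mod_cast hn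
      linarith
    calc 2 * (Fintype.card A : ℝ) = ((2 * Fintype.card A : ℕ) : ℝ) := by push_cast; ring
      _ ≤ ((2 ^ Fintype.card A : ℕ) : ℝ) := by exact_mod_cast h1
      _ = (2 : ℝ) ^ Fintype.card A := by push_cast; ring
      _ ≤ ((n : ℝ) + 1) ^ Fintype.card A := pow_le_pow_left₀ (by norm_num) h2 _
  have hfinal : 2 * (Fintype.card A : ℝ) * eb ≤ ((n : ℝ) + 1) ^ Fintype.card A * eb :=
    mul_le_mul_of_nonneg_right h2k hebpos.le
  linarith

end
end

section
/- Let C be a finite set and let P_1, ..., P_J and Q be probability distributions on C^n with ‖P_j − Q‖ ≤ ε for all j, where ‖·‖ is total variation distance and ε ≤ (2e)^{-1}. Let P̄ = (1/J)∑_j P_j. Then for a uniformly distributed random variable J̃ on {1,...,J} with conditional output distribution P_{J̃}, the mutual information satisfies I(J̃; Z^n) = (1/J)∑_{j=1}^J (H(P̄) − H(P_j)) ≤ −2ε log(2ε) + 2nε log|C|. -/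
open scoped BigOperators Classical

noncomputable section

/-- One-sided/absolute continuity of `x ↦ -(x log x)`. -/
lemma aux_negmullog {q t : ℝ} (hq : 0 ≤ q) (ht : 0 ≤ t) (h1 : q + t ≤ 1)
    (hte : t ≤ Real.exp (-1)) :
    |(-((q + t) * Real.log (q + t))) - (-(q * Real.log q))| ≤ -(t * Real.log t) := by
  rcases ht.eq_or_lt with h | htpos
  · simp [← h]
  have hlogt : Real.log t ≤ -1 := by
    have := Real.log_le_log htpos hte
    rwa [Real.log_exp] at this
  have httlog : t ≤ -(t * Real.log t) := by nlinarith
  rw [abs_le]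
  constructor
  · -- F q - F p ≤ t ≤ -(t log t)
    have key : (q + t) * Real.log (q + t) - q * Real.log q ≤ t := by
      rcases hq.eq_or_lt with h | hqpos
      · simp only [← h, zero_add, Real.log_zero, mul_zero, sub_zero]
        have := Real.mul_log_nonpos ht (by linarith)
        linarith
      · have hlogdiv : Real.log ((q + t) / q) ≤ (q + t) / q - 1 :=
          Real.log_le_sub_one_of_pos (by positivity)
        rw [Real.log_div (by linarith) (by linarith)] at hlogdiv
        have h2 : q * (Real.log (q + t) - Real.log q) ≤ q * ((q + t) / q - 1) :=
          mul_le_mul_of_nonneg_left hlogdiv hq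
        have h3 : q * ((q + t) / q - 1) = t := by field_simp; ring
        have h4 : t * Real.log (q + t) ≤ 0 := by
          have := Real.log_nonpos (by linarith) h1
          nlinarith
        nlinarith
    linarith
  · -- F p - F q ≤ -(t log t) (subadditivity)
    have h2 : t * Real.log t ≤ t * Real.log (q + t) :=
      mul_le_mul_of_nonneg_left (Real.log_le_log htpos (by linarith)) ht
    have h3 : q * Real.log q ≤ q * Real.log (q + t) := by
      rcases hq.eq_or_lt with h | hqpos
      · simp [← h]
      · exact mul_le_mul_of_nonneg_left (Real.log_le_log hqpos (by linarith)) hq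
    nlinarith

lemma aux_negmullog' {p q : ℝ} (hp : 0 ≤ p) (hq : 0 ≤ q) (hp1 : p ≤ 1) (hq1 : q ≤ 1)
    (ht : |p - q| ≤ Real.exp (-1)) :
    |(-(p * Real.log p)) - (-(q * Real.log q))| ≤ -(|p - q| * Real.log |p - q|) := by
  rcases le_total q p with h | h
  · have habs : |p - q| = p - q := abs_of_nonneg (by linarith)
    rw [habs] at ht ⊢
    have := aux_negmullog hq (by linarith : (0:ℝ) ≤ p - q) (by linarith) ht
    simpa [show q + (p - q) = p by ring] using this
  · have habs : |p - q| = q - p := by rw [abs_sub_comm]; exact abs_of_nonneg (by linarith)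
    rw [habs] at ht ⊢
    have := aux_negmullog hp (by linarith : (0:ℝ) ≤ q - p) (by linarith) ht
    rw [abs_sub_comm]
    simpa [show p + (q - p) = q by ring] using this

/-- Grouping bound per term. -/
lemma aux_group {t d0 N : ℝ} (ht : 0 ≤ t) (hd0 : 0 < d0) (hN : 1 ≤ N) :
    -(t * Real.log t) ≤ t * Real.log N - t * Real.log d0 + d0 / N - t := by
  rcases ht.eq_or_lt with h | htpos
  · simp only [← h]; simp; positivity
  have h1 : Real.log (d0 / (N * t)) ≤ d0 / (N * t) - 1 :=
    Real.log_le_sub_one_of_pos (by positivity)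
  rw [Real.log_div (by positivity) (by positivity),
      Real.log_mul (by positivity) (by positivity)] at h1
  have h2 : t * (Real.log d0 - (Real.log N + Real.log t)) ≤ t * (d0 / (N * t) - 1) :=
    mul_le_mul_of_nonneg_left h1 ht
  have h3 : t * (d0 / (N * t) - 1) = d0 / N - t := by
    field_simp
  nlinarith [h2, h3]
theorem leakage_bound {C : Type*} [Fintype C] (n J : ℕ) (hJ : 0 < J)
    (P : Fin J → (Fin n → C) → ℝ) (Q : (Fin n → C) → ℝ)
    (hP0 : ∀ j z, 0 ≤ P j z) (hP1 : ∀ j, ∑ z, P j z = 1)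
    (hQ0 : ∀ z, 0 ≤ Q z) (hQ1 : ∑ z, Q z = 1)
    (ε : ℝ) (hε : 0 < ε) (hε' : ε ≤ (2 * Real.exp 1)⁻¹)
    (hclose : ∀ j, tv (P j) Q ≤ ε) :
    (1 / (J : ℝ)) * ∑ j, (shannonH (fun z => (1 / (J : ℝ)) * ∑ j', P j' z) - shannonH (P j))
      ≤ -(2 * ε) * Real.logb 2 (2 * ε) + 2 * (n : ℝ) * ε * Real.logb 2 (Fintype.card C) := by
  classical
  have hJR : (0:ℝ) < J := by exact_mod_cast hJ
  set d0 : ℝ := 2 * ε with hd0def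
  have hd0pos : 0 < d0 := by positivity
  have hd0e : d0 ≤ Real.exp (-1) := by
    rw [Real.exp_neg]
    have he : (0:ℝ) < Real.exp 1 := Real.exp_pos 1
    have h2 : (2 * Real.exp 1)⁻¹ = (Real.exp 1)⁻¹ / 2 := by
      rw [mul_inv]; ring
    rw [h2] at hε'
    rw [hd0def]; linarith
  -- nonemptiness
  have hNe : Nonempty (Fin n → C) := by
    by_contra h
    rw [not_nonempty_iff] at h
    rw [Finset.univ_eq_empty, Finset.sum_empty] at hQ1
    norm_num at hQ1
  have hcardpos : 0 < Fintype.card (Fin n → C) := Fintype.card_pos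
  set N : ℝ := (Fintype.card (Fin n → C) : ℝ) with hNdef
  have hN1 : 1 ≤ N := by rw [hNdef]; exact_mod_cast hcardpos
  have hlogN : 0 ≤ Real.log N := Real.log_nonneg hN1
  have hlogd0 : Real.log d0 ≤ -1 := by
    have := Real.log_le_log hd0pos hd0e
    rwa [Real.log_exp] at this
  set Pb : (Fin n → C) → ℝ := fun z => (1 / (J:ℝ)) * ∑ j', P j' z with hPbdef
  have hPb0 : ∀ z, 0 ≤ Pb z := by
    intro z
    apply mul_nonneg (by positivity)
    exact Finset.sum_nonneg fun j' _ => hP0 j' z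
  have hPb1 : ∑ z, Pb z = 1 := by
    rw [hPbdef, ← Finset.mul_sum, Finset.sum_comm]
    simp only [hP1, Finset.sum_const, Finset.card_univ, Fintype.card_fin, nsmul_eq_mul, mul_one]
    field_simp
  have hPle1 : ∀ j z, P j z ≤ 1 := by
    intro j z
    have := Finset.single_le_sum (f := fun z => P j z) (fun i _ => hP0 j i) (Finset.mem_univ z)
    rwa [hP1 j] at this
  have hPble1 : ∀ z, Pb z ≤ 1 := by
    intro z
    have := Finset.single_le_sum (f := fun z => Pb z) (fun i _ => hPb0 i) (Finset.mem_univ z)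
    rwa [hPb1] at this
  have hsh : ∀ q : (Fin n → C) → ℝ,
      shannonH q = (∑ x, -(q x * Real.log (q x))) / Real.log 2 := by
    intro q
    have hterm : ∀ x : (Fin n → C), q x * (Real.log (q x) / Real.log 2)
        = (q x * Real.log (q x)) / Real.log 2 := fun x => by ring
    simp only [shannonH, Real.logb, hterm, ← Finset.sum_div, ← neg_div,
      ← Finset.sum_neg_distrib]
  -- per-j bound
  have key : ∀ j, shannonH Pb - shannonH (P j)
      ≤ d0 * Real.logb 2 N - d0 * Real.logb 2 d0 := by
    intro j
    set t : (Fin n → C) → ℝ := fun z => |Pb z - P j z| with htdef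
    have ht0 : ∀ z, 0 ≤ t z := fun z => abs_nonneg _
    have hd : ∑ z, t z ≤ d0 := by
      have step1 : ∀ z, t z ≤ (1/(J:ℝ)) * ∑ j', |P j' z - P j z| := by
        intro z
        have hrow : Pb z - P j z = (1/(J:ℝ)) * ∑ j', (P j' z - P j z) := by
          rw [hPbdef]
          simp only [Finset.sum_sub_distrib, Finset.sum_const, Finset.card_univ,
            Fintype.card_fin, nsmul_eq_mul]
          field_simp
        rw [htdef]
        simp only []
        rw [hrow, abs_mul, abs_of_nonneg (by positivity : (0:ℝ) ≤ 1/(J:ℝ))]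
        apply mul_le_mul_of_nonneg_left _ (by positivity)
        exact Finset.abs_sum_le_sum_abs _ _
      calc ∑ z, t z ≤ ∑ z, (1/(J:ℝ)) * ∑ j', |P j' z - P j z| :=
            Finset.sum_le_sum fun z _ => step1 z
        _ = (1/(J:ℝ)) * ∑ j', ∑ z, |P j' z - P j z| := by
            rw [← Finset.mul_sum, Finset.sum_comm]
        _ ≤ (1/(J:ℝ)) * ∑ _j' : Fin J, (2*ε) := by
            apply mul_le_mul_of_nonneg_left _ (by positivity)
            apply Finset.sum_le_sum
            intro j' _
            calc ∑ z, |P j' z - P j z| ≤ ∑ z, (|P j' z - Q z| + |Q z - P j z|) :=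
                  Finset.sum_le_sum fun z _ => abs_sub_le _ _ _
              _ = tv (P j') Q + ∑ z, |Q z - P j z| := by
                  rw [Finset.sum_add_distrib]; rfl
              _ = tv (P j') Q + tv (P j) Q := by
                  congr 1
                  exact Finset.sum_congr rfl fun z _ => abs_sub_comm _ _
              _ ≤ ε + ε := add_le_add (hclose j') (hclose j)
              _ = 2*ε := by ring
        _ = d0 := by
            rw [Finset.sum_const, Finset.card_univ, Fintype.card_fin, nsmul_eq_mul, hd0def]
            field_simp
    have hte : ∀ z, t z ≤ Real.exp (-1) := by
      intro z
      have h1 : t z ≤ ∑ z', t z' :=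
        Finset.single_le_sum (fun i _ => ht0 i) (Finset.mem_univ z)
      linarith
    have hmain : (∑ x, -(Pb x * Real.log (Pb x))) - (∑ x, -(P j x * Real.log (P j x)))
        ≤ d0 * Real.log N - d0 * Real.log d0 := by
      have hconst : (Fintype.card (Fin n → C) : ℝ) * (d0 / N) = d0 := by
        rw [← hNdef]; field_simp
      calc (∑ x, -(Pb x * Real.log (Pb x))) - (∑ x, -(P j x * Real.log (P j x)))
          = ∑ x, ((-(Pb x * Real.log (Pb x))) - (-(P j x * Real.log (P j x)))) :=
            (Finset.sum_sub_distrib _ _).symm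
        _ ≤ ∑ x, |(-(Pb x * Real.log (Pb x))) - (-(P j x * Real.log (P j x)))| :=
            Finset.sum_le_sum fun x _ => le_abs_self _
        _ ≤ ∑ x, -(t x * Real.log (t x)) :=
            Finset.sum_le_sum fun x _ =>
              aux_negmullog' (hPb0 x) (hP0 j x) (hPble1 x) (hPle1 j x) (hte x)
        _ ≤ ∑ x, (t x * Real.log N - t x * Real.log d0 + d0/N - t x) :=
            Finset.sum_le_sum fun x _ => aux_group (ht0 x) hd0pos hN1
        _ = (∑ x, t x) * Real.log N - (∑ x, t x) * Real.log d0
              + (Fintype.card (Fin n → C) : ℝ) * (d0/N) - (∑ x, t x) := by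
            rw [Finset.sum_sub_distrib, Finset.sum_add_distrib, Finset.sum_sub_distrib,
              ← Finset.sum_mul, ← Finset.sum_mul, Finset.sum_const, Finset.card_univ,
              nsmul_eq_mul]
        _ ≤ d0 * Real.log N - d0 * Real.log d0 := by
            rw [hconst]
            have hprod : 0 ≤ (d0 - ∑ x, t x) * (Real.log N - Real.log d0 - 1) :=
              mul_nonneg (by linarith) (by linarith)
            nlinarith [hprod]
    calc shannonH Pb - shannonH (P j)
        = ((∑ x, -(Pb x * Real.log (Pb x))) - (∑ x, -(P j x * Real.log (P j x)))) / Real.log 2 := by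
          rw [hsh, hsh, div_sub_div_same]
      _ ≤ (d0 * Real.log N - d0 * Real.log d0) / Real.log 2 :=
          (div_le_div_iff_of_pos_right (Real.log_pos one_lt_two)).mpr hmain
      _ = d0 * Real.logb 2 N - d0 * Real.logb 2 d0 := by
          simp only [Real.logb]; ring
  have hfinal : (1/(J:ℝ)) * ∑ j, (shannonH Pb - shannonH (P j))
      ≤ d0 * Real.logb 2 N - d0 * Real.logb 2 d0 := by
    calc (1/(J:ℝ)) * ∑ j, (shannonH Pb - shannonH (P j))
        ≤ (1/(J:ℝ)) * ∑ _j : Fin J, (d0 * Real.logb 2 N - d0 * Real.logb 2 d0) :=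
          mul_le_mul_of_nonneg_left (Finset.sum_le_sum fun j _ => key j) (by positivity)
      _ = d0 * Real.logb 2 N - d0 * Real.logb 2 d0 := by
          rw [Finset.sum_const, Finset.card_univ, Fintype.card_fin, nsmul_eq_mul]
          field_simp
  have hNlogb : Real.logb 2 N = n * Real.logb 2 (Fintype.card C) := by
    have hNcard : N = ((Fintype.card C : ℝ)) ^ n := by
      rw [hNdef, Fintype.card_fun, Fintype.card_fin]
      push_cast
      ring
    rw [hNcard, Real.logb_pow]
  calc (1 / (J : ℝ)) * ∑ j, (shannonH Pb - shannonH (P j))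
      ≤ d0 * Real.logb 2 N - d0 * Real.logb 2 d0 := hfinal
    _ = -d0 * Real.logb 2 d0 + 2 * (n : ℝ) * ε * Real.logb 2 (Fintype.card C) := by
        rw [hNlogb, hd0def]; ring

end
end

section
/- Let D_η denote the binary symmetric channel matrix with crossover probability η. Let W_0 = D_η with η ∈ [0,1/2), V_0 = D_τ W_0 with τ ∈ (0,1/2), W_1 = D_{τ̂} V_0, and V_1 the completely noisy channel with all entries 1/2. Then for the uniform input p_0 = (1/2, 1/2), I(p_0, V_1) = 0, and for every fixed η ∈ [0,1/2) and every sufficiently small τ > 0 there exists τ̂ ∈ (0,1/2] such that I(p_0, W_0) − I(p_0, V_0) > I(p_0, W_1). -/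
open scoped BigOperators Classical

noncomputable section

/-- The binary symmetric channel with crossover probability `η`. -/
def bsc (η : ℝ) : Fin 2 → Fin 2 → ℝ := fun a b => if a = b then 1 - η else η

/-- Concatenation of channels: `(K ∘ W)(a,c) = ∑_b K(a,b) W(b,c)` (matrix product). -/
def chComp (K W : Fin 2 → Fin 2 → ℝ) : Fin 2 → Fin 2 → ℝ :=
  fun a c => ∑ b, K a b * W b c

lemma chComp_bsc (τ η : ℝ) : chComp (bsc τ) (bsc η) = bsc (τ + η - 2 * τ * η) := by
  funext a c
  fin_cases a <;> fin_cases c <;>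
    simp [chComp, bsc, Fin.sum_univ_two] <;> ring

lemma mutInfo_unif_bsc (ν : ℝ) :
    mutInfo (fun _ : Fin 2 => (1 / 2 : ℝ)) (bsc ν) = 1 - Real.binEntropy ν / Real.log 2 := by
  have h2 : Real.logb 2 (1/2 : ℝ) = -1 := by
    rw [show (1/2 : ℝ) = 2⁻¹ by norm_num, Real.logb_inv]
    simp
  have hout : outDist (fun _ : Fin 2 => (1 / 2 : ℝ)) (bsc ν) = fun _ => (1/2 : ℝ) := by
    funext b; fin_cases b <;> simp [outDist, bsc, Fin.sum_univ_two] <;> ring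
  have hb : ∀ a : Fin 2, shannonH (bsc ν a) = Real.binEntropy ν / Real.log 2 := by
    intro a
    fin_cases a <;>
      simp [shannonH, bsc, Fin.sum_univ_two, Real.binEntropy, Real.log_inv, Real.logb,
        div_eq_mul_inv] <;> ring
  unfold mutInfo condH
  rw [hout, Fin.sum_univ_two, hb 0, hb 1]
  simp [shannonH, Fin.sum_univ_two, h2]
  ring

lemma bsc_half : (fun _ _ : Fin 2 => (1/2 : ℝ)) = bsc (1/2) := by
  funext a b; simp [bsc]; norm_num

lemma part1 : mutInfo (fun _ : Fin 2 => (1 / 2 : ℝ)) (fun _ _ : Fin 2 => (1 / 2 : ℝ)) = 0 := by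
  rw [bsc_half, mutInfo_unif_bsc]
  rw [show (1/2:ℝ) = 2⁻¹ by norm_num, Real.binEntropy_two_inv,
    div_self (Real.log_ne_zero_of_pos_of_ne_one (by norm_num) (by norm_num))]
  ring

theorem bsc_example :
    mutInfo (fun _ : Fin 2 => (1 / 2 : ℝ)) (fun _ _ : Fin 2 => (1 / 2 : ℝ)) = 0 ∧
    ∀ η : ℝ, 0 ≤ η → η < 1 / 2 →
      ∃ τ₀ > (0 : ℝ), ∀ τ : ℝ, 0 < τ → τ < τ₀ → τ < 1 / 2 →
        ∃ τhat : ℝ, 0 < τhat ∧ τhat ≤ 1 / 2 ∧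
          mutInfo (fun _ : Fin 2 => (1 / 2 : ℝ)) (bsc η) -
              mutInfo (fun _ : Fin 2 => (1 / 2 : ℝ)) (chComp (bsc τ) (bsc η)) >
            mutInfo (fun _ : Fin 2 => (1 / 2 : ℝ))
              (chComp (bsc τhat) (chComp (bsc τ) (bsc η))) := by
  refine ⟨part1, ?_⟩
  intro η hη0 hη
  refine ⟨1/2, by norm_num, ?_⟩
  intro τ hτ0 _ hτ
  refine ⟨1/2, by norm_num, le_refl _, ?_⟩
  set ν : ℝ := τ + η - 2 * τ * η with hν
  have hcomp : chComp (bsc τ) (bsc η) = bsc ν := chComp_bsc τ η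
  have hcomp2 : chComp (bsc (1/2)) (bsc ν) = bsc (1/2) := by
    rw [chComp_bsc]; ring_nf
  rw [hcomp, hcomp2, mutInfo_unif_bsc, mutInfo_unif_bsc, mutInfo_unif_bsc]
  rw [show (1/2:ℝ) = 2⁻¹ by norm_num, Real.binEntropy_two_inv,
    div_self (Real.log_ne_zero_of_pos_of_ne_one (by norm_num) (by norm_num))]
  have hlt : Real.binEntropy η < Real.binEntropy ν := by
    apply Real.binEntropy_strictMonoOn
    · exact ⟨hη0, by norm_num; linarith⟩
    · constructor
      · nlinarith
      · rw [show (2⁻¹:ℝ) = 1/2 by norm_num]; nlinarith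
    · nlinarith
  have hlog : (0:ℝ) < Real.log 2 := Real.log_pos (by norm_num)
  have h2 : Real.binEntropy η / Real.log 2 < Real.binEntropy ν / Real.log 2 := by
    gcongr
  linarith


end
end
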